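/- arXiv:2503.10576 — 3 statements merged into one kernel-verified Lean document; each statement's English description precedes it below -/
import Mathlib

section
/- For Σ symmetric positive definite, the unique symmetric positive definite matrix Δ solving Δ = Δ^{-1/2}(Δ^{1/2} Σ Δ^{1/2})^{1/2} Δ^{-1/2} is Δ = Σ^{1/3}. -/
/-!
Writing `Δ = D²` with `D = Δ^{1/2}`, the fixed-point equation says `S = D Δ D = D⁴`, where
`S = (D Σ D)^{1/2}`. By uniqueness of positive semidefinite square roots this is equivalent to
`D Σ D = S² = D⁸ = D Δ³ D`, and cancelling the invertible `D` on both sides leaves `Δ³ = Σ`.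
-/

open Matrix

theorem Matrix.eq_inv_mul_mul_inv_iff {n α : Type*} [Fintype n] [DecidableEq n] [CommRing α]
    {A X Y : Matrix n n α} (hA : IsUnit A) : X = A⁻¹ * Y * A⁻¹ ↔ A * X * A = Y := by
  have hdet := (isUnit_iff_isUnit_det A).mp hA
  constructor
  · rintro rfl
    simp [Matrix.mul_assoc, hdet]
  · rintro rfl
    simp [Matrix.mul_assoc, hdet]

open scoped ComplexOrder MatrixOrder in
theorem Matrix.PosSemidef.mul_self_eq_mul_self_iff {n 𝕜 : Type*} [Fintype n] [DecidableEq n]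
    [RCLike 𝕜] {A B : Matrix n n 𝕜} (hA : A.PosSemidef) (hB : B.PosSemidef) :
    A * A = B * B ↔ A = B :=
  CFC.mul_self_eq_mul_self_iff A B hA.nonneg hB.nonneg

theorem fixed_point_eq_cbrt_general (d : ℕ) (Sig Delta Ds S : Matrix (Fin d) (Fin d) ℝ)
    (hDs : Ds.PosDef) (hDs2 : Ds * Ds = Delta)
    (hS : S.PosDef) (hS2 : S * S = Ds * Sig * Ds) :
    Delta = Ds⁻¹ * S * Ds⁻¹ ↔ Delta ^ 3 = Sig := by
  have hunit : IsUnit Ds := hDs.isUnit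
  subst hDs2
  calc Ds * Ds = Ds⁻¹ * S * Ds⁻¹ ↔ Ds ^ 4 = S := by
        rw [eq_inv_mul_mul_inv_iff hunit]
        simp only [← pow_two, ← pow_succ, ← pow_succ']
    _ ↔ Ds ^ 4 * Ds ^ 4 = S * S :=
        ((hDs.posSemidef.pow 4).mul_self_eq_mul_self_iff hS.posSemidef).symm
    _ ↔ Ds * (Ds * Ds) ^ 3 * Ds = Ds * Sig * Ds := by
        rw [hS2]
        simp only [← pow_two, ← pow_mul, ← pow_succ, ← pow_succ']
    _ ↔ (Ds * Ds) ^ 3 = Sig := by rw [hunit.mul_left_inj, hunit.mul_right_inj]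

/-- For `Σ` symmetric positive definite, the unique symmetric positive
definite matrix `Δ` solving `Δ = Δ^{-1/2} (Δ^{1/2} Σ Δ^{1/2})^{1/2} Δ^{-1/2}` is
`Δ = Σ^{1/3}`.  Here `Δs` denotes the unique positive definite square root of `Δ` and
`S` the unique positive definite square root of `Δs * Σ * Δs`, so the statement reads:
`Δ = Δs⁻¹ * S * Δs⁻¹` if and only if `Δ ^ 3 = Σ` (i.e. `Δ` is the positive definite
cube root `Σ^{1/3}` of `Σ`). -/
theorem fixed_point_eq_cbrt (d : ℕ) (Sig Delta Ds S : Matrix (Fin d) (Fin d) ℝ)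
    (hSig : Sig.PosDef) (hDelta : Delta.PosDef)
    (hDs : Ds.PosDef) (hDs2 : Ds * Ds = Delta)
    (hS : S.PosDef) (hS2 : S * S = Ds * Sig * Ds) :
    Delta = Ds⁻¹ * S * Ds⁻¹ ↔ Delta ^ 3 = Sig :=
  fixed_point_eq_cbrt_general d Sig Delta Ds S hDs hDs2 hS hS2
end

section
/- The optimal transport (Monge) map for the quadratic cost between two nondegenerate Gaussians N(m_A, Σ_A) and N(m_B, Σ_B) on ℝ^d is T(x) = m_B + M(x − m_A) with M = Σ_A^{-1/2}(Σ_A^{1/2} Σ_B Σ_A^{1/2})^{1/2} Σ_A^{-1/2}; in particular T ♯ N(m_A, Σ_A) = N(m_B, Σ_B) and T is the gradient of a convex function. -/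
open MeasureTheory Matrix RealInnerProductSpace

/-- The Gaussian measure `N(m, Σ)` on `ℝ^d` (as a Euclidean space), given by its density
with respect to Lebesgue measure. -/
noncomputable def gaussianMeasureE (d : ℕ) (m : EuclideanSpace ℝ (Fin d))
    (S : Matrix (Fin d) (Fin d) ℝ) : Measure (EuclideanSpace ℝ (Fin d)) :=
  volume.withDensity fun x => ENNReal.ofReal
    ((Real.sqrt ((2 * Real.pi) ^ d * S.det))⁻¹ *
      Real.exp (-(1 / 2) * ⟪x - m, Matrix.toEuclideanLin S⁻¹ (x - m)⟫))

open scoped ENNReal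

/-! The map `T x = m_B + M (x - m_A)` is the gradient of the quadratic
`½ ⟪M (x - m_A), x - m_A⟫ + ⟪m_B, x⟫`, which is convex because `M = Σ_A^{-1/2} S Σ_A^{-1/2}` is a
congruence of the positive matrix `S`. By the change of variables formula an invertible affine
map sends the density of `N(m_A, Σ_A)` to that of `N(m_B, M Σ_A Mᵀ)`, and `M` solves the Riccati
equation `M Σ_A M = Σ_B` because `S² = Σ_A^{1/2} Σ_B Σ_A^{1/2}`. -/

section QuadraticPotential

variable {E : Type*} [NormedAddCommGroup E] [InnerProductSpace ℝ E]

theorem LinearMap.IsPositive.convexOn_inner_map_self {T : E →ₗ[ℝ] E} (hT : T.IsPositive) :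
    ConvexOn ℝ Set.univ fun x => ⟪T x, x⟫ := by
  refine ⟨convex_univ, fun x _ y _ a b ha hb hab => ?_⟩
  have hxy : ⟪T x, y⟫ = ⟪T y, x⟫ := by rw [hT.isSymmetric, real_inner_comm]
  have gap : a * ⟪T x, x⟫ + b * ⟪T y, y⟫ - ⟪T (a • x + b • y), a • x + b • y⟫
      = a * b * ⟪T (x - y), x - y⟫ := by
    obtain rfl : b = 1 - a := by linarith
    simp only [map_add, map_sub, map_smul, inner_add_left, inner_add_right, inner_sub_left,
      inner_sub_right, real_inner_smul_left, real_inner_smul_right, hxy]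
    ring
  have := mul_nonneg (mul_nonneg ha hb) (hT.inner_nonneg_left (x - y))
  simp only [smul_eq_mul]
  linarith

noncomputable def quadraticPotential (T : E →L[ℝ] E) (a b x : E) : ℝ :=
  1 / 2 * ⟪T (x - a), x - a⟫ + ⟪b, x⟫

variable (T : E →L[ℝ] E) (a b : E)

theorem convexOn_quadraticPotential (hT : T.IsPositive) :
    ConvexOn ℝ Set.univ (quadraticPotential T a b) := by
  have hquad := (hT.toLinearMap.convexOn_inner_map_self.translate_right (-a)).smul
    (c := (1 / 2 : ℝ)) (by norm_num)
  rw [Set.preimage_univ] at hquad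
  refine (hquad.add ((innerSL ℝ b).toLinearMap.convexOn convex_univ)).congr fun x _ => ?_
  simp [quadraticPotential, neg_add_eq_sub]

theorem hasGradientAt_quadraticPotential [CompleteSpace E] (hT : T.IsSymmetric) (x : E) :
    HasGradientAt (quadraticPotential T a b) (b + T (x - a)) x := by
  rw [hasGradientAt_iff_hasFDerivAt]
  have hsub : HasFDerivAt (fun y : E => y - a) (ContinuousLinearMap.id ℝ E) x :=
    (hasFDerivAt_id x).sub_const a
  have := (((T.hasFDerivAt.comp x hsub).inner ℝ hsub).const_mul (1 / 2 : ℝ)).add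
    (innerSL ℝ b).hasFDerivAt
  refine this.congr_fderiv (ContinuousLinearMap.ext fun y => ?_)
  have hsymm : ⟪T y, x - a⟫ = ⟪T (x - a), y⟫ := (hT y (x - a)).trans (real_inner_comm _ _)
  simp only [one_div, Function.comp_apply, ContinuousLinearMap.comp_id, _root_.add_apply,
    _root_.smul_apply, ContinuousLinearMap.comp_apply, ContinuousLinearMap.prod_apply,
    ContinuousLinearMap.id_apply, fderivInnerCLM_apply, smul_eq_mul, coe_innerSL_apply,
    InnerProductSpace.toDual_apply_apply, inner_add_left, hsymm]
  ring

end QuadraticPotential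

theorem MeasurableEquiv.map_withDensity {α β : Type*} [MeasurableSpace α] [MeasurableSpace β]
    (e : α ≃ᵐ β) (μ : Measure α) (f : α → ℝ≥0∞) :
    (μ.withDensity f).map e = (μ.map e).withDensity (f ∘ e.symm) := by
  ext s hs
  rw [e.map_apply, withDensity_apply _ (e.measurable hs), withDensity_apply _ hs, e.restrict_map,
    lintegral_map_equiv]
  simp

section AffineChangeOfVariables

variable {E : Type*} [NormedAddCommGroup E] [NormedSpace ℝ E] [MeasurableSpace E] [BorelSpace E]
  [FiniteDimensional ℝ E] (μ : Measure E) [μ.IsAddHaarMeasure] (f : E ≃ₗ[ℝ] E) (a b : E)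

theorem map_affine_addHaar :
    μ.map (fun x => b + f (x - a)) = ENNReal.ofReal |(LinearMap.det (f : E →ₗ[ℝ] E))⁻¹| • μ := by
  have hf : Continuous (f : E →ₗ[ℝ] E) := LinearMap.continuous_of_finiteDimensional _
  rw [show (fun x => b + f (x - a)) = (b + ·) ∘ (f : E →ₗ[ℝ] E) ∘ (· + -a) by
      ext; simp [sub_eq_add_neg],
    ← Measure.map_map (by fun_prop) (hf.comp (by fun_prop)).measurable,
    ← Measure.map_map hf.measurable (by fun_prop), map_add_right_eq_self,
    Measure.map_linearMap_addHaar_eq_smul_addHaar μ f.isUnit_det'.ne_zero,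
    Measure.map_smul, map_add_left_eq_self]

theorem map_affine_withDensity_addHaar (g : E → ℝ≥0∞) :
    (μ.withDensity g).map (fun x => b + f (x - a)) = μ.withDensity fun y =>
      ENNReal.ofReal |(LinearMap.det (f : E →ₗ[ℝ] E))⁻¹| * g (a + f.symm (y - b)) := by
  let e : E ≃ᵐ E := (((Homeomorph.subRight a).trans
    f.toContinuousLinearEquiv.toHomeomorph).trans (Homeomorph.addLeft b)).toMeasurableEquiv
  have he : ⇑e = fun x => b + f (x - a) := rfl
  have he_symm (y : E) : e.symm y = a + f.symm (y - b) := e.symm_apply_eq.mpr (by simp [he])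
  rw [← he, e.map_withDensity, he, map_affine_addHaar, withDensity_smul_measure,
    ← withDensity_smul' _ _ ENNReal.ofReal_ne_top]
  congr 1
  ext y
  simp [he_symm]

end AffineChangeOfVariables

theorem Matrix.inner_toEuclideanLin_left {n : Type*} [Fintype n] [DecidableEq n]
    (A : Matrix n n ℝ) (u v : EuclideanSpace ℝ n) :
    ⟪toEuclideanLin A u, v⟫ = ⟪u, toEuclideanLin Aᵀ v⟫ := by
  rw [← conjTranspose_eq_transpose_of_trivial, toEuclideanLin_conjTranspose_eq_adjoint,
    LinearMap.adjoint_inner_right]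

theorem map_affine_gaussianMeasureE {d : ℕ} (m m' : EuclideanSpace ℝ (Fin d))
    (S M : Matrix (Fin d) (Fin d) ℝ) (hM : IsUnit M.det) :
    (gaussianMeasureE d m S).map (fun x => m' + toEuclideanLin M (x - m)) =
      gaussianMeasureE d m' (M * S * Mᵀ) := by
  let f := M.toLinearEquiv (EuclideanSpace.basisFun (Fin d) ℝ).toBasis hM
  have hdet : LinearMap.det (f : EuclideanSpace ℝ (Fin d) →ₗ[ℝ] _) = M.det :=
    LinearMap.det_toLin _ M
  have hquad (v : EuclideanSpace ℝ (Fin d)) :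
      ⟪f.symm v, toEuclideanLin S⁻¹ (f.symm v)⟫ = ⟪v, toEuclideanLin (M * S * Mᵀ)⁻¹ v⟫ := by
    change ⟪toEuclideanLin M⁻¹ v, _⟫ = _
    rw [inner_toEuclideanLin_left, Matrix.mul_inv_rev, Matrix.mul_inv_rev, ← transpose_nonsing_inv,
      ← Matrix.mul_assoc, toLpLin_mul_same, toLpLin_mul_same]
    rfl
  have hnorm : √((2 * Real.pi) ^ d * (M * S * Mᵀ).det) =
      |M.det| * √((2 * Real.pi) ^ d * S.det) := by
    rw [det_mul, det_mul, det_transpose, ← Real.sqrt_sq_eq_abs, ← Real.sqrt_mul (sq_nonneg _)]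
    congr 1
    ring
  change (volume.withDensity _).map (fun x => m' + f (x - m)) = _
  rw [map_affine_withDensity_addHaar, hdet]
  congr 1
  ext y
  rw [← ENNReal.ofReal_mul (abs_nonneg _), add_sub_cancel_left, hquad, hnorm, mul_inv, abs_inv]
  congr 1
  ring

theorem Matrix.inv_mul_mul_inv_solves_riccati {n R : Type*} [Fintype n] [DecidableEq n]
    [CommRing R] {a s b : Matrix n n R} (ha : IsUnit a.det) (hs : s * s = a * b * a) :
    a⁻¹ * s * a⁻¹ * (a * a) * (a⁻¹ * s * a⁻¹) = b := by
  calc a⁻¹ * s * a⁻¹ * (a * a) * (a⁻¹ * s * a⁻¹) = a⁻¹ * (s * s) * a⁻¹ := by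
        simp only [Matrix.mul_assoc, nonsing_inv_mul_cancel_left _ _ ha,
          mul_nonsing_inv_cancel_left _ _ ha]
    _ = b := by
        rw [hs, Matrix.mul_assoc a, nonsing_inv_mul_cancel_left _ _ ha,
          mul_nonsing_inv_cancel_right _ _ ha]

theorem ot_map_between_gaussians_general (d : ℕ) (mA mB : EuclideanSpace ℝ (Fin d))
    (SigA SigB sA S : Matrix (Fin d) (Fin d) ℝ)
    (hsA : sA.PosDef) (hsA2 : sA * sA = SigA)
    (hS : S.PosDef) (hS2 : S * S = sA * SigB * sA) :
    letI M : Matrix (Fin d) (Fin d) ℝ := sA⁻¹ * S * sA⁻¹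
    letI T : EuclideanSpace ℝ (Fin d) → EuclideanSpace ℝ (Fin d) :=
      fun x => mB + Matrix.toEuclideanLin M (x - mA)
    Measure.map T (gaussianMeasureE d mA SigA) = gaussianMeasureE d mB SigB ∧
      ∃ φ : EuclideanSpace ℝ (Fin d) → ℝ,
        ConvexOn ℝ Set.univ φ ∧ ∀ x, HasGradientAt φ (T x) x := by
  set M : Matrix (Fin d) (Fin d) ℝ := sA⁻¹ * S * sA⁻¹
  have hsA_unit : IsUnit sA.det := hsA.det_pos.ne'.isUnit
  have hM_unit : IsUnit M.det := by
    simpa [M, det_mul, hsA_unit.ne_zero] using hS.det_pos.ne'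
  have hM_psd : M.PosSemidef := by
    simpa only [hsA.isHermitian.inv.eq] using hS.posSemidef.mul_mul_conjTranspose_same sA⁻¹
  have hM_symm : Mᵀ = M := (isHermitian_iff_isSymm.mp hM_psd.isHermitian).eq
  have hM_pos : (toEuclideanLin M).toContinuousLinearMap.IsPositive :=
    isPositive_toEuclideanLin_iff.mpr hM_psd
  refine ⟨?_, quadraticPotential (toEuclideanLin M).toContinuousLinearMap mA mB,
    convexOn_quadraticPotential _ _ _ hM_pos,
    hasGradientAt_quadraticPotential _ _ _ hM_pos.isSymmetric⟩
  rw [map_affine_gaussianMeasureE _ _ _ _ hM_unit, hM_symm, ← hsA2,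
    inv_mul_mul_inv_solves_riccati hsA_unit hS2]

/-- The optimal transport (Monge) map for the quadratic cost between two
nondegenerate Gaussians `N(m_A, Σ_A)` and `N(m_B, Σ_B)` is
`T(x) = m_B + M (x − m_A)` with `M = Σ_A^{-1/2} (Σ_A^{1/2} Σ_B Σ_A^{1/2})^{1/2} Σ_A^{-1/2}`:
`T` pushes `N(m_A, Σ_A)` forward to `N(m_B, Σ_B)` and `T` is the gradient of a convex
function.  Here `sA` is the positive definite square root of `Σ_A` and `S` the positive
definite square root of `sA * Σ_B * sA`, so that `M = sA⁻¹ * S * sA⁻¹`. -/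
theorem ot_map_between_gaussians (d : ℕ) (mA mB : EuclideanSpace ℝ (Fin d))
    (SigA SigB sA S : Matrix (Fin d) (Fin d) ℝ)
    (hA : SigA.PosDef) (hB : SigB.PosDef)
    (hsA : sA.PosDef) (hsA2 : sA * sA = SigA)
    (hS : S.PosDef) (hS2 : S * S = sA * SigB * sA) :
    letI M : Matrix (Fin d) (Fin d) ℝ := sA⁻¹ * S * sA⁻¹
    letI T : EuclideanSpace ℝ (Fin d) → EuclideanSpace ℝ (Fin d) :=
      fun x => mB + Matrix.toEuclideanLin M (x - mA)
    Measure.map T (gaussianMeasureE d mA SigA) = gaussianMeasureE d mB SigB ∧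
      ∃ φ : EuclideanSpace ℝ (Fin d) → ℝ,
        ConvexOn ℝ Set.univ φ ∧ ∀ x, HasGradientAt φ (T x) x :=
  ot_map_between_gaussians_general d mA mB SigA SigB sA S hsA hsA2 hS hS2
end

section
/- Let μ and ν be probability measures on ℝ with μ atomless. Then the map T = C_ν^{-1} ∘ C_μ pushes μ forward to ν, where C_μ is the cumulative distribution function of μ and C_ν^{-1}(r) = inf{x : C_ν(x) ≥ r} is the quantile function of ν. -/
open MeasureTheory

/-- The cumulative distribution function of a measure on `ℝ`: `C_μ(x) = μ((-∞, x])`. -/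
noncomputable def cdfOf (μ : Measure ℝ) (x : ℝ) : ℝ := (μ (Set.Iic x)).toReal

/-- The quantile (generalized inverse) function: `C_ν⁻¹(r) = inf {x : C_ν(x) ≥ r}`. -/
noncomputable def quantileOf (ν : Measure ℝ) (r : ℝ) : ℝ := sInf {x : ℝ | r ≤ cdfOf ν x}

/-!
The map factors through the uniform distribution on `(0, 1)`. Since `μ` has no atoms, `C_μ` is
continuous, so `{C_μ ≤ t} = (-∞, c]` for a point `c` with `C_μ(c) = t`: `C_μ` pushes `μ` to the
uniform distribution. On `(0, 1)` the quantile function satisfies `C_ν⁻¹(r) ≤ a ↔ r ≤ C_ν(a)`, so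
it pushes the uniform distribution to the measure with distribution function `C_ν`, namely `ν`.
-/

open Set Filter ProbabilityTheory

lemma volume_Iic_inter_Ioo_zero_one (t : ℝ) :
    volume (Iic t ∩ Ioo 0 1) = ENNReal.ofReal (min t 1) := by
  rw [← measure_congr (Iio_ae_eq_Iic.inter (ae_eq_refl (Ioo (0 : ℝ) 1))), Iio_inter_Ioo,
    Real.volume_Ioo, sub_zero]

namespace ProbabilityTheory

variable (μ : Measure ℝ) [IsProbabilityMeasure μ] [NullSingletonClass μ]

lemma continuous_cdf : Continuous (cdf μ) := by
  refine continuous_iff_continuousAt.2 fun x ↦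
    (monotone_cdf μ).continuousAt_iff_leftLim_eq_rightLim.2 ?_
  have h := (cdf μ).measure_singleton x
  rw [measure_cdf, measure_singleton, eq_comm, ENNReal.ofReal_eq_zero, sub_nonpos] at h
  rw [StieltjesFunction.rightLim_eq]
  exact le_antisymm ((monotone_cdf μ).leftLim_le le_rfl) h

lemma measure_cdf_le (t : ℝ) : μ {x | cdf μ x ≤ t} = ENNReal.ofReal (min t 1) := by
  set S := {x | cdf μ x ≤ t}
  rcases le_or_gt 1 t with ht | ht
  · have hS : S = univ := eq_univ_of_forall fun x ↦ (cdf_le_one μ x).trans ht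
    simp [hS, min_eq_right ht]
  rcases S.eq_empty_or_nonempty with hS | hS
  · have ht0 : t ≤ 0 := by
      by_contra! h
      obtain ⟨x, hx⟩ := ((tendsto_cdf_atBot μ).eventually_lt_const h).exists
      exact hS.subset hx.le
    simp [hS, ENNReal.ofReal_eq_zero.2 ((min_le_left _ _).trans ht0)]
  have hbdd : BddAbove S := by
    obtain ⟨a, ha⟩ := ((tendsto_cdf_atTop μ).eventually_const_lt ht).exists_forall_of_atTop
    exact ⟨a, fun y hy ↦ (lt_of_not_ge fun hay ↦ (ha y hay).not_ge hy).le⟩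
  set c := sSup S
  have hc : c ∈ S := (isClosed_le (continuous_cdf μ) continuous_const).csSup_mem hS hbdd
  have hSc : S = Iic c :=
    Subset.antisymm (fun y hy ↦ le_csSup hbdd hy) fun y hy ↦ (monotone_cdf μ hy).trans hc
  have hFc : cdf μ c = t := by
    refine le_antisymm hc (ge_of_tendsto (((continuous_cdf μ).tendsto c).mono_left
      (nhdsWithin_le_nhds (s := Ioi c))) (eventually_nhdsWithin_of_forall fun y hy ↦ ?_))
    exact (not_le.1 fun h ↦ (le_csSup hbdd h).not_gt hy).le
  rw [hSc, ← ofReal_cdf, hFc, min_eq_left ht.le]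

lemma map_cdf_eq_restrict_Ioo : μ.map (cdf μ) = volume.restrict (Ioo 0 1) := by
  have := μ.isFiniteMeasure_map (cdf μ)
  refine Measure.ext_of_Iic _ _ fun t ↦ ?_
  rw [Measure.map_apply (monotone_cdf μ).measurable measurableSet_Iic,
    Measure.restrict_apply measurableSet_Iic, volume_Iic_inter_Ioo_zero_one, ← measure_cdf_le μ]
  rfl

end ProbabilityTheory

section Quantile

variable (ν : Measure ℝ) [IsProbabilityMeasure ν]

lemma cdfOf_eq_cdf : cdfOf ν = cdf ν :=
  funext fun x ↦ (cdf_eq_real ν x).symm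

-- Outside `(0, 1)` the set in `quantileOf` is empty or unbounded below, and `sInf` gives `0`.
lemma quantileOf_le_iff {r : ℝ} (hr : r ∈ Ioo 0 1) (a : ℝ) :
    quantileOf ν r ≤ a ↔ r ≤ cdf ν a := by
  have hne : {x | r ≤ cdf ν x}.Nonempty :=
    ((tendsto_cdf_atTop ν).eventually_const_lt hr.2).exists.imp fun _ ↦ le_of_lt
  have hbdd : BddBelow {x | r ≤ cdf ν x} := by
    obtain ⟨b, hb⟩ := ((tendsto_cdf_atBot ν).eventually_lt_const hr.1).exists_forall_of_atBot
    exact ⟨b, fun y hy ↦ (lt_of_not_ge fun hyb ↦ (hb y hyb).not_ge hy).le⟩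
  rw [quantileOf, cdfOf_eq_cdf]
  refine ⟨fun h ↦ ?_, fun h ↦ csInf_le hbdd h⟩
  refine ge_of_tendsto (((cdf ν).right_continuous a).mono Ioi_subset_Ici_self)
    (eventually_nhdsWithin_of_forall fun b hb ↦ ?_)
  obtain ⟨s, hs, hsb⟩ := exists_lt_of_csInf_lt hne (h.trans_lt hb)
  exact hs.trans (monotone_cdf ν hsb.le)

lemma monotoneOn_quantileOf : MonotoneOn (quantileOf ν) (Ioo 0 1) := fun _ hr _ hr' h ↦
  (quantileOf_le_iff ν hr _).2 (h.trans ((quantileOf_le_iff ν hr' _).1 le_rfl))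

lemma aemeasurable_quantileOf_restrict_Ioo :
    AEMeasurable (quantileOf ν) (volume.restrict (Ioo 0 1)) :=
  aemeasurable_restrict_of_monotoneOn measurableSet_Ioo (monotoneOn_quantileOf ν)

lemma map_quantileOf_restrict_Ioo : (volume.restrict (Ioo 0 1)).map (quantileOf ν) = ν := by
  refine (Measure.ext_of_Iic ν _ fun a ↦ ?_).symm
  have hpre : quantileOf ν ⁻¹' Iic a ∩ Ioo 0 1 = Iic (cdf ν a) ∩ Ioo 0 1 := by
    ext r
    exact and_congr_left (quantileOf_le_iff ν · a)
  rw [Measure.map_apply_of_aemeasurable (aemeasurable_quantileOf_restrict_Ioo ν)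
      measurableSet_Iic, Measure.restrict_apply' measurableSet_Ioo, hpre,
    volume_Iic_inter_Ioo_zero_one, min_eq_left (cdf_le_one ν a), ofReal_cdf]

end Quantile

/-- Let `μ` and `ν` be probability measures on `ℝ` with `μ` atomless.
Then `T = C_ν⁻¹ ∘ C_μ` pushes `μ` forward to `ν`. -/
theorem quantile_cdf_pushforward (μ ν : Measure ℝ)
    [IsProbabilityMeasure μ] [IsProbabilityMeasure ν] [NullSingletonClass μ] :
    Measure.map (fun x => quantileOf ν (cdfOf μ x)) μ = ν := by
  have hq : AEMeasurable (quantileOf ν) (μ.map (cdf μ)) := by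
    rw [map_cdf_eq_restrict_Ioo]
    exact aemeasurable_quantileOf_restrict_Ioo ν
  calc μ.map (fun x => quantileOf ν (cdfOf μ x))
      = (μ.map (cdf μ)).map (quantileOf ν) := by
        rw [cdfOf_eq_cdf, hq.map_map_of_aemeasurable (monotone_cdf μ).measurable.aemeasurable]
        rfl
    _ = ν := by rw [map_cdf_eq_restrict_Ioo, map_quantileOf_restrict_Ioo]
end
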